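/- Let t ∈ ℕ be odd. Any spherical t-design X_N ⊂ S¹ on the circle satisfies N ≥ t + 1. -/

import Mathlib

/-!
Identify the plane with `ℂ` through `z = x₀ + i x₁`. The arc-length measure on `S¹` is invariant
under the rotation by `π / k`, which multiplies `z ^ k` by `-1`; hence `∫_{S¹} z ^ k = 0` for
`k ≥ 1`. Since `Re z ^ k` and `Im z ^ k` are real polynomials of degree `k`, a `t`-design has
vanishing power sums `∑ zᵢ ^ k` for `1 ≤ k ≤ t`. If `N ≤ t`, expanding `g = ∏ (X - zᵢ)` (of degree
`N`) gives `0 = ∑ g(zᵢ) = N g(0) = N ∏ (-zᵢ)`, impossible since the `zᵢ` are nonzero.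
-/

open Real MeasureTheory

/-- `X_N ⊂ S¹` is a spherical `t`-design on the circle: the equal-weight
average of every bivariate polynomial of total degree `≤ t` over the points
equals its mean over `S¹` with respect to arc-length measure (total mass `2π`). -/
def IsCircleDesign (t : ℕ) {N : ℕ} (x : Fin N → EuclideanSpace ℝ (Fin 2)) : Prop :=
  ∀ p : MvPolynomial (Fin 2) ℝ, p.totalDegree ≤ t →
    (1 / (N : ℝ)) * ∑ i, MvPolynomial.eval (fun j => x i j) p =
      (1 / (2 * Real.pi)) *
        ∫ y : Metric.sphere (0 : EuclideanSpace ℝ (Fin 2)) 1,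
          MvPolynomial.eval (fun j => (y : EuclideanSpace ℝ (Fin 2)) j) p
          ∂((volume : Measure (EuclideanSpace ℝ (Fin 2))).toSphere)

theorem lt_card_of_sum_pow_eq_zero {K ι : Type*} [Field K] [CharZero K] [Fintype ι]
    [Nonempty ι] {z : ι → K} (hz : ∀ i, z i ≠ 0) {t : ℕ}
    (hsum : ∀ k, 0 < k → k ≤ t → ∑ i, z i ^ k = 0) : t < Fintype.card ι := by
  by_contra! hle
  let g : Polynomial K := ∏ i, (Polynomial.X - Polynomial.C (z i))
  have hdeg : g.natDegree = Fintype.card ι := by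
    simp [g, Polynomial.natDegree_prod _ _ fun i _ => Polynomial.X_sub_C_ne_zero (z i)]
  have hcoeff : g.coeff 0 ≠ 0 := by
    simp [g, Polynomial.coeff_zero_eq_eval_zero, Polynomial.eval_prod, Finset.prod_ne_zero_iff, hz]
  have hroots : ∑ i, g.eval (z i) = 0 :=
    Finset.sum_eq_zero fun i _ => by
      simpa [g, Polynomial.eval_prod] using Finset.prod_eq_zero (Finset.mem_univ i) (sub_self (z i))
  have hexpand : ∑ i, g.eval (z i) = Fintype.card ι * g.coeff 0 := by
    simp_rw [Polynomial.eval_eq_sum_range, hdeg]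
    rw [Finset.sum_comm, Finset.sum_range_succ', Finset.sum_eq_zero]
    · simp
    · intro j hj
      rw [← Finset.mul_sum, hsum (j + 1) j.succ_pos (by linarith [Finset.mem_range.mp hj]), mul_zero]
  exact mul_ne_zero (Nat.cast_ne_zero.mpr Fintype.card_ne_zero) hcoeff (hexpand ▸ hroots)

open Metric
open scoped Pointwise

local notation "toℂ" => Complex.orthonormalBasisOneI.repr.symm

namespace LinearIsometryEquiv

variable {E : Type*} [NormedAddCommGroup E] [NormedSpace ℝ E]

def sphereHomeomorph (f : E ≃ₗᵢ[ℝ] E) : sphere (0 : E) 1 ≃ₜ sphere (0 : E) 1 :=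
  f.toHomeomorph.subtype fun x => by simp

@[simp]
theorem coe_sphereHomeomorph_apply (f : E ≃ₗᵢ[ℝ] E) (y : sphere (0 : E) 1) :
    (f.sphereHomeomorph y : E) = f y := rfl

theorem preimage_set_smul (f : E ≃ₗᵢ[ℝ] E) (T : Set ℝ) (A : Set E) :
    f ⁻¹' (T • A) = T • f ⁻¹' A := by
  ext v
  simp only [Set.mem_preimage, Set.mem_smul]
  constructor
  · rintro ⟨r, hr, a, ha, hv⟩
    exact ⟨r, hr, f.symm a, by simpa using ha, f.injective (by simp [hv])⟩
  · rintro ⟨r, hr, a, ha, rfl⟩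
    exact ⟨r, hr, f a, ha, (f.map_smul r a).symm⟩

theorem image_val_preimage_sphereHomeomorph (f : E ≃ₗᵢ[ℝ] E) (s : Set (sphere (0 : E) 1)) :
    (↑) '' (f.sphereHomeomorph ⁻¹' s) = f ⁻¹' ((↑) '' s) := by
  ext v
  constructor
  · rintro ⟨y, hy, rfl⟩
    exact ⟨_, hy, rfl⟩
  · rintro ⟨w, hw, hwv⟩
    have hv : v ∈ sphere (0 : E) 1 := by
      simpa using (hwv ▸ w.2 : f v ∈ sphere (0 : E) 1)
    have hw' : f.sphereHomeomorph ⟨v, hv⟩ = w := Subtype.ext hwv.symm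
    exact ⟨⟨v, hv⟩, by rwa [Set.mem_preimage, hw'], rfl⟩

variable [MeasurableSpace E] [BorelSpace E]

theorem measurePreserving_sphereHomeomorph {μ : Measure E} {f : E ≃ₗᵢ[ℝ] E}
    (hf : MeasurePreserving f μ μ) :
    MeasurePreserving f.sphereHomeomorph μ.toSphere μ.toSphere := by
  refine ⟨f.sphereHomeomorph.continuous.measurable, ?_⟩
  ext s hs
  have hs' := f.sphereHomeomorph.continuous.measurable hs
  rw [Measure.map_apply f.sphereHomeomorph.continuous.measurable hs, Measure.toSphere_apply' _ hs,
    Measure.toSphere_apply' _ hs', image_val_preimage_sphereHomeomorph, ← preimage_set_smul,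
    hf.measure_preimage_emb f.toHomeomorph.measurableEmbedding]

end LinearIsometryEquiv

theorem integral_toSphere_pow_eq_zero {k : ℕ} (hk : k ≠ 0) :
    ∫ y : sphere (0 : EuclideanSpace ℝ (Fin 2)) 1, toℂ y ^ k
      ∂(volume : Measure (EuclideanSpace ℝ (Fin 2))).toSphere = 0 := by
  set ω : Circle := Circle.exp (π / k)
  have hω : (ω : ℂ) ^ k = -1 := by
    rw [Circle.coe_exp, ← Complex.exp_nat_mul]
    push_cast
    field_simp
    exact Complex.exp_pi_mul_I
  let ρ := (toℂ).trans ((rotation ω).trans (toℂ).symm)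
  have hρ : ∀ v, toℂ (ρ v) = ω * toℂ v := by simp [ρ]
  have hinv := (ρ.measurePreserving_sphereHomeomorph ρ.measurePreserving).integral_comp
    ρ.sphereHomeomorph.measurableEmbedding (fun y => toℂ y ^ k)
  simp only [LinearIsometryEquiv.coe_sphereHomeomorph_apply, hρ, mul_pow, hω,
    integral_const_mul] at hinv
  linear_combination -hinv / 2

open MvPolynomial in
noncomputable def complexPowReIm : ℕ → MvPolynomial (Fin 2) ℝ × MvPolynomial (Fin 2) ℝ
  | 0 => (1, 0)
  | k + 1 =>
    (X 0 * (complexPowReIm k).1 - X 1 * (complexPowReIm k).2,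
      X 0 * (complexPowReIm k).2 + X 1 * (complexPowReIm k).1)

namespace complexPowReIm

open MvPolynomial

theorem eval_fst_add_eval_snd_mul_I (k : ℕ) (v : Fin 2 → ℝ) :
    (eval v (complexPowReIm k).1 : ℂ) + eval v (complexPowReIm k).2 * Complex.I =
      (v 0 + v 1 * Complex.I) ^ k := by
  induction k with
  | zero => simp [complexPowReIm]
  | succ k ih =>
    rw [pow_succ, ← ih]
    simp only [complexPowReIm, map_sub, map_add, map_mul, eval_X]
    push_cast
    linear_combination (-(MvPolynomial.eval v (complexPowReIm k).2 * v 1 : ℂ)) * Complex.I_sq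

theorem totalDegree_le (k : ℕ) :
    (complexPowReIm k).1.totalDegree ≤ k ∧ (complexPowReIm k).2.totalDegree ≤ k := by
  induction k with
  | zero => simp [complexPowReIm]
  | succ k ih =>
    have hX : ∀ (j : Fin 2) (p : MvPolynomial (Fin 2) ℝ), p.totalDegree ≤ k →
        (X j * p).totalDegree ≤ k + 1 := fun j p hp =>
      (totalDegree_mul _ _).trans (by rw [totalDegree_X]; omega)
    exact ⟨(totalDegree_sub _ _).trans (max_le (hX _ _ ih.1) (hX _ _ ih.2)),
      (totalDegree_add _ _).trans (max_le (hX _ _ ih.2) (hX _ _ ih.1))⟩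

theorem eval_fst (k : ℕ) (y : EuclideanSpace ℝ (Fin 2)) :
    MvPolynomial.eval (fun j => y j) (complexPowReIm k).1 = (toℂ y ^ k).re := by
  simp [Complex.orthonormalBasisOneI_repr_symm_apply, ← eval_fst_add_eval_snd_mul_I k]

theorem eval_snd (k : ℕ) (y : EuclideanSpace ℝ (Fin 2)) :
    MvPolynomial.eval (fun j => y j) (complexPowReIm k).2 = (toℂ y ^ k).im := by
  simp [Complex.orthonormalBasisOneI_repr_symm_apply, ← eval_fst_add_eval_snd_mul_I k]

end complexPowReIm

theorem measureReal_toSphere_univ_fin_two :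
    (volume : Measure (EuclideanSpace ℝ (Fin 2))).toSphere.real Set.univ = 2 * π := by
  simp [measureReal_def, pi_nonneg]

namespace IsCircleDesign

variable {t N : ℕ} {x : Fin N → EuclideanSpace ℝ (Fin 2)}

theorem pos (hx : IsCircleDesign t x) : 0 < N := by
  have h := hx 1 (by simp)
  simp only [map_one, integral_const, measureReal_toSphere_univ_fin_two] at h
  rw [Nat.pos_iff_ne_zero]
  rintro rfl
  simp [pi_ne_zero] at h

theorem sum_eval_eq_zero (hx : IsCircleDesign t x) {p : MvPolynomial (Fin 2) ℝ}
    (hp : p.totalDegree ≤ t)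
    (hint : ∫ y : sphere (0 : EuclideanSpace ℝ (Fin 2)) 1, MvPolynomial.eval (fun j => y.1 j) p
      ∂(volume : Measure (EuclideanSpace ℝ (Fin 2))).toSphere = 0) :
    ∑ i, MvPolynomial.eval (fun j => x i j) p = 0 := by
  have h := hx p hp
  rw [hint, mul_zero, mul_eq_zero] at h
  exact h.resolve_left (by simp [hx.pos.ne'])

theorem sum_pow_eq_zero (hx : IsCircleDesign t x) {k : ℕ} (hk : 0 < k) (hkt : k ≤ t) :
    ∑ i, toℂ (x i) ^ k = 0 := by
  have hcont : Continuous fun y : sphere (0 : EuclideanSpace ℝ (Fin 2)) 1 => toℂ y ^ k := by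
    fun_prop
  have hint : Integrable (fun y : sphere (0 : EuclideanSpace ℝ (Fin 2)) 1 => toℂ y ^ k)
      (volume : Measure (EuclideanSpace ℝ (Fin 2))).toSphere :=
    hcont.integrable_of_hasCompactSupport (HasCompactSupport.of_compactSpace _)
  have hzero := integral_toSphere_pow_eq_zero hk.ne'
  have hre := hx.sum_eval_eq_zero ((complexPowReIm.totalDegree_le k).1.trans hkt) <| by
    simp_rw [complexPowReIm.eval_fst]
    exact (integral_re hint).trans (by rw [hzero, map_zero])
  have him := hx.sum_eval_eq_zero ((complexPowReIm.totalDegree_le k).2.trans hkt) <| by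
    simp_rw [complexPowReIm.eval_snd]
    exact (integral_im hint).trans (by rw [hzero, map_zero])
  simp only [complexPowReIm.eval_fst, complexPowReIm.eval_snd] at hre him
  exact Complex.ext (by simpa [Complex.re_sum] using hre) (by simpa [Complex.im_sum] using him)

end IsCircleDesign

theorem circleDesign_lower_bound_general (t N : ℕ)
    (x : Fin N → EuclideanSpace ℝ (Fin 2))
    (hx : ∀ i, x i ∈ Metric.sphere (0 : EuclideanSpace ℝ (Fin 2)) 1)
    (hdesign : IsCircleDesign t x) :
    t + 1 ≤ N := by
  have : Nonempty (Fin N) := Fin.pos_iff_nonempty.mp hdesign.pos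
  have hz : ∀ i, toℂ (x i) ≠ 0 := fun i =>
    (map_ne_zero_iff _ (toℂ).injective).mpr (ne_zero_of_mem_unit_sphere ⟨x i, hx i⟩)
  simpa using lt_card_of_sum_pow_eq_zero hz fun k hk hkt => hdesign.sum_pow_eq_zero hk hkt

/-- Delsarte–Goethals–Seidel lower bound on the circle for odd `t`:
any spherical `t`-design `X_N ⊂ S¹` satisfies `N ≥ t + 1`. -/
theorem circleDesign_lower_bound (t N : ℕ) (ht : Odd t)
    (x : Fin N → EuclideanSpace ℝ (Fin 2))
    (hx : ∀ i, x i ∈ Metric.sphere (0 : EuclideanSpace ℝ (Fin 2)) 1)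
    (hdesign : IsCircleDesign t x) :
    t + 1 ≤ N :=
  circleDesign_lower_bound_general t N x hx hdesign
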